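/- arXiv:1606.05272 — 4 statements merged into one kernel-verified Lean document; each statement's English description precedes it below -/
import Mathlib

section
/- Fix positive integers n, m, real n×n matrices A and L with L symmetric, a real n×m matrix B, reals q and r with r > 0, and a function x̄ : ℝ → ℝⁿ. Let Γ : ℝ → (n×n real matrices), β : ℝ → ℝⁿ, δ : ℝ → ℝ be differentiable with Γ(t) symmetric for all t and satisfying, for all t: Γ'(t) = (1/r)·Γ(t) B Bᵀ Γ(t) − Γ(t) A − Aᵀ Γ(t) − q·I, β'(t) = ((1/r)·Γ(t) B Bᵀ − Aᵀ) β(t) − q·L x̄(t), and δ'(t) = (1/(2r))·⟪β(t), B Bᵀ β(t)⟫. Let u : ℝ → ℝᵐ and let x : ℝ → ℝⁿ be differentiable with x'(t) = A x(t) + B u(t) for all t. Then for every t, the function V(t) = ½⟪x(t), Γ(t) x(t)⟫ + ⟪β(t), x(t)⟫ + δ(t) is differentiable with V'(t) = −(q/2)‖x(t)‖² − q⟪x̄(t), L x(t)⟫ − (r/2)‖u(t)‖² + (r/2)‖u(t) + (1/r)·Bᵀ(Γ(t) x(t) + β(t))‖². -/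
/-!
Differentiate `V` by the product rule and substitute the Riccati equation for `Γ'`, the offset
equation for `β'` and the dynamics for `x'`. Since `Γ` is symmetric, the terms involving `A`
cancel in pairs, and what is left besides `-(q/2)‖x‖² - q⟪x̄, L x⟫` is
`⟪Bᵀ(Γx + β), u⟫ + (1/(2r))‖Bᵀ(Γx + β)‖²`, which is
`(r/2)‖u + (1/r)Bᵀ(Γx + β)‖² - (r/2)‖u‖²` by completing the square.
-/

open scoped RealInnerProductSpace Matrix

attribute [local instance] Matrix.normedAddCommGroup Matrix.normedSpace

theorem half_mul_norm_add_one_div_smul_sq {E : Type*} [NormedAddCommGroup E]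
    [InnerProductSpace ℝ E] {r : ℝ} (hr : r ≠ 0) (u v : E) :
    r / 2 * ‖u + (1 / r) • v‖ ^ 2 = r / 2 * ‖u‖ ^ 2 + ⟪v, u⟫ + 1 / (2 * r) * ‖v‖ ^ 2 := by
  rw [norm_add_sq_real, norm_smul, real_inner_smul_right, real_inner_comm, mul_pow,
    Real.norm_eq_abs, sq_abs]
  field_simp

namespace Matrix

variable {ι κ : Type*} [Fintype ι] [Fintype κ] [DecidableEq κ]

theorem hasDerivAt_toEuclideanLin_apply {M : ℝ → Matrix ι κ ℝ} {M' : Matrix ι κ ℝ}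
    {v : ℝ → EuclideanSpace ℝ κ} {v' : EuclideanSpace ℝ κ} {t : ℝ}
    (hM : HasDerivAt M M' t) (hv : HasDerivAt v v' t) :
    HasDerivAt (fun s => toEuclideanLin (M s) (v s))
      (toEuclideanLin M' (v t) + toEuclideanLin (M t) v') t := by
  let toCLM : Matrix ι κ ℝ →L[ℝ] (EuclideanSpace ℝ κ →L[ℝ] EuclideanSpace ℝ ι) :=
    LinearMap.toContinuousLinearMap
      (LinearMap.toContinuousLinearMap.toLinearMap ∘ₗ toEuclideanLin.toLinearMap)
  exact (toCLM.hasFDerivAt.comp_hasDerivAt t hM).clm_apply hv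

variable [DecidableEq ι]

theorem inner_toEuclideanLin_transpose_left (M : Matrix ι κ ℝ) (a : EuclideanSpace ℝ ι)
    (c : EuclideanSpace ℝ κ) :
    ⟪toEuclideanLin Mᵀ a, c⟫ = ⟪a, toEuclideanLin M c⟫ := by
  rw [← conjTranspose_eq_transpose_of_trivial, toEuclideanLin_conjTranspose_eq_adjoint,
    LinearMap.adjoint_inner_left]

theorem inner_toEuclideanLin_mul_transpose_self (B : Matrix ι κ ℝ) (b : EuclideanSpace ℝ ι) :
    ⟪b, toEuclideanLin (B * Bᵀ) b⟫ = ‖toEuclideanLin Bᵀ b‖ ^ 2 := by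
  rw [toLpLin_mul_same, LinearMap.comp_apply, ← inner_toEuclideanLin_transpose_left,
    real_inner_self_eq_norm_sq]

theorem IsSymm.inner_toEuclideanLin_left {M : Matrix ι ι ℝ} (hM : M.IsSymm)
    (a c : EuclideanSpace ℝ ι) :
    ⟪toEuclideanLin M a, c⟫ = ⟪a, toEuclideanLin M c⟫ := by
  simpa only [hM.eq] using inner_toEuclideanLin_transpose_left M a c

theorem IsSymm.hasDerivAt_inner_toEuclideanLin_self {Γ : ℝ → Matrix ι ι ℝ}
    {Γ' : Matrix ι ι ℝ} {x : ℝ → EuclideanSpace ℝ ι} {x' : EuclideanSpace ℝ ι} {t : ℝ}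
    (hsymm : (Γ t).IsSymm) (hΓ : HasDerivAt Γ Γ' t) (hx : HasDerivAt x x' t) :
    HasDerivAt (fun s => ⟪x s, toEuclideanLin (Γ s) (x s)⟫)
      (⟪x t, toEuclideanLin Γ' (x t)⟫ + 2 * ⟪toEuclideanLin (Γ t) (x t), x'⟫) t := by
  refine (hx.inner ℝ (hasDerivAt_toEuclideanLin_apply hΓ hx)).congr_deriv ?_
  rw [inner_add_right, ← hsymm.inner_toEuclideanLin_left (x t) x', real_inner_comm x']
  ring

variable {G : Matrix ι ι ℝ}

theorem IsSymm.inner_riccati_toEuclideanLin_self (hG : G.IsSymm) (A : Matrix ι ι ℝ)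
    (B : Matrix ι κ ℝ) (q r : ℝ) (X : EuclideanSpace ℝ ι) :
    ⟪X, toEuclideanLin
        ((1 / r) • (G * B * Bᵀ * G) - G * A - Aᵀ * G - q • (1 : Matrix ι ι ℝ)) X⟫ =
      1 / r * ‖toEuclideanLin Bᵀ (toEuclideanLin G X)‖ ^ 2 -
        2 * ⟪toEuclideanLin G X, toEuclideanLin A X⟫ - q * ‖X‖ ^ 2 := by
  simp only [map_sub, map_smul, LinearMap.sub_apply, LinearMap.smul_apply,
    toLpLin_mul_same, LinearMap.comp_apply, toLpLin_one, LinearMap.id_apply, inner_sub_right,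
    real_inner_smul_right, real_inner_self_eq_norm_sq]
  rw [← hG.inner_toEuclideanLin_left, ← hG.inner_toEuclideanLin_left,
    ← inner_toEuclideanLin_transpose_left B, real_inner_self_eq_norm_sq, real_inner_comm _ X,
    inner_toEuclideanLin_transpose_left]
  ring

theorem IsSymm.inner_offset_toEuclideanLin {L : Matrix ι ι ℝ} (hG : G.IsSymm) (hL : L.IsSymm)
    (A : Matrix ι ι ℝ) (B : Matrix ι κ ℝ) (q r : ℝ) (b y X : EuclideanSpace ℝ ι) :
    ⟪toEuclideanLin ((1 / r) • (G * B * Bᵀ) - Aᵀ) b - q • toEuclideanLin L y, X⟫ =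
      1 / r * ⟪toEuclideanLin Bᵀ (toEuclideanLin G X), toEuclideanLin Bᵀ b⟫ -
        ⟪b, toEuclideanLin A X⟫ - q * ⟪y, toEuclideanLin L X⟫ := by
  simp only [map_sub, map_smul, LinearMap.sub_apply, LinearMap.smul_apply,
    toLpLin_mul_same, LinearMap.comp_apply, inner_sub_left, real_inner_smul_left]
  rw [hG.inner_toEuclideanLin_left, hL.inner_toEuclideanLin_left,
    inner_toEuclideanLin_transpose_left, real_inner_comm, ← inner_toEuclideanLin_transpose_left]

end Matrix

theorem value_function_derivative_identity_general (n m : ℕ)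
    (A L : Matrix (Fin n) (Fin n) ℝ) (hL : L.IsSymm)
    (B : Matrix (Fin n) (Fin m) ℝ) (q r : ℝ) (hr : 0 < r)
    (xbar : ℝ → EuclideanSpace ℝ (Fin n))
    (Γ : ℝ → Matrix (Fin n) (Fin n) ℝ) (β : ℝ → EuclideanSpace ℝ (Fin n)) (δ : ℝ → ℝ)
    (hΓs : ∀ t : ℝ, (Γ t).IsSymm)
    (hΓ : ∀ t : ℝ, HasDerivAt Γ
      ((1 / r) • (Γ t * B * Bᵀ * Γ t) - Γ t * A - Aᵀ * Γ t -
        q • (1 : Matrix (Fin n) (Fin n) ℝ)) t)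
    (hβ : ∀ t : ℝ, HasDerivAt β
      (Matrix.toEuclideanLin ((1 / r) • (Γ t * B * Bᵀ) - Aᵀ) (β t) -
        q • Matrix.toEuclideanLin L (xbar t)) t)
    (hδ : ∀ t : ℝ, HasDerivAt δ
      ((1 / (2 * r)) * ⟪β t, Matrix.toEuclideanLin (B * Bᵀ) (β t)⟫) t)
    (u : ℝ → EuclideanSpace ℝ (Fin m)) (x : ℝ → EuclideanSpace ℝ (Fin n))
    (hx : ∀ t : ℝ, HasDerivAt x
      (Matrix.toEuclideanLin A (x t) + Matrix.toEuclideanLin B (u t)) t)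
    (t : ℝ) :
    HasDerivAt
      (fun s : ℝ => (1 / 2) * ⟪x s, Matrix.toEuclideanLin (Γ s) (x s)⟫ +
        ⟪β s, x s⟫ + δ s)
      (-(q / 2) * ‖x t‖ ^ 2 - q * ⟪xbar t, Matrix.toEuclideanLin L (x t)⟫ -
        (r / 2) * ‖u t‖ ^ 2 +
        (r / 2) * ‖u t + (1 / r) •
          Matrix.toEuclideanLin Bᵀ (Matrix.toEuclideanLin (Γ t) (x t) + β t)‖ ^ 2) t := by
  have hV := ((((hΓs t).hasDerivAt_inner_toEuclideanLin_self (hΓ t) (hx t)).const_mul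
    (1 / 2)).add ((hβ t).inner ℝ (hx t))).add (hδ t)
  refine hV.congr_deriv ?_
  rw [(hΓs t).inner_riccati_toEuclideanLin_self, (hΓs t).inner_offset_toEuclideanLin hL,
    Matrix.inner_toEuclideanLin_mul_transpose_self, half_mul_norm_add_one_div_smul_sq hr.ne',
    map_add, norm_add_sq_real, inner_add_left, inner_add_right, inner_add_right,
    ← Matrix.inner_toEuclideanLin_transpose_left B,
    ← Matrix.inner_toEuclideanLin_transpose_left B]
  ring

/-- Completion-of-squares (verification) identity: along any trajectory of `ẋ = Ax + Bu`,
the candidate value `V(t) = ½⟪x, Γ x⟫ + ⟪β, x⟫ + δ` built from the Riccati/offset solutions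
has derivative `−(q/2)‖x‖² − q⟪x̄, L x⟫ − (r/2)‖u‖² + (r/2)‖u + (1/r)Bᵀ(Γx + β)‖²`. -/
theorem value_function_derivative_identity (n m : ℕ) (hn : 0 < n) (hm : 0 < m)
    (A L : Matrix (Fin n) (Fin n) ℝ) (hL : L.IsSymm)
    (B : Matrix (Fin n) (Fin m) ℝ) (q r : ℝ) (hr : 0 < r)
    (xbar : ℝ → EuclideanSpace ℝ (Fin n))
    (Γ : ℝ → Matrix (Fin n) (Fin n) ℝ) (β : ℝ → EuclideanSpace ℝ (Fin n)) (δ : ℝ → ℝ)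
    (hΓs : ∀ t : ℝ, (Γ t).IsSymm)
    (hΓ : ∀ t : ℝ, HasDerivAt Γ
      ((1 / r) • (Γ t * B * Bᵀ * Γ t) - Γ t * A - Aᵀ * Γ t -
        q • (1 : Matrix (Fin n) (Fin n) ℝ)) t)
    (hβ : ∀ t : ℝ, HasDerivAt β
      (Matrix.toEuclideanLin ((1 / r) • (Γ t * B * Bᵀ) - Aᵀ) (β t) -
        q • Matrix.toEuclideanLin L (xbar t)) t)
    (hδ : ∀ t : ℝ, HasDerivAt δ
      ((1 / (2 * r)) * ⟪β t, Matrix.toEuclideanLin (B * Bᵀ) (β t)⟫) t)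
    (u : ℝ → EuclideanSpace ℝ (Fin m)) (x : ℝ → EuclideanSpace ℝ (Fin n))
    (hx : ∀ t : ℝ, HasDerivAt x
      (Matrix.toEuclideanLin A (x t) + Matrix.toEuclideanLin B (u t)) t)
    (t : ℝ) :
    HasDerivAt
      (fun s : ℝ => (1 / 2) * ⟪x s, Matrix.toEuclideanLin (Γ s) (x s)⟫ +
        ⟪β s, x s⟫ + δ s)
      (-(q / 2) * ‖x t‖ ^ 2 - q * ⟪xbar t, Matrix.toEuclideanLin L (x t)⟫ -
        (r / 2) * ‖u t‖ ^ 2 +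
        (r / 2) * ‖u t + (1 / r) •
          Matrix.toEuclideanLin Bᵀ (Matrix.toEuclideanLin (Γ t) (x t) + β t)‖ ^ 2) t :=
  value_function_derivative_identity_general n m A L hL B q r hr xbar Γ β δ hΓs hΓ hβ hδ u x hx t
end

section
/- Fix positive integers n, m, l, real n×n matrices A and L with L symmetric, a real n×m matrix B, reals q and r with r > 0, T > 0, and a continuous function x̄ : [0,T] → ℝⁿ. For each j ∈ {1,…,l}, let M_j ≥ 0, p_j ∈ ℝⁿ, and let Γ_j : [0,T] → (n×n real matrices), β_j : [0,T] → ℝⁿ, δ_j : [0,T] → ℝ be continuously differentiable with Γ_j(t) symmetric for all t, satisfying on [0,T] the equations Γ_j' = (1/r)·Γ_j B Bᵀ Γ_j − Γ_j A − Aᵀ Γ_j − q·I, β_j' = ((1/r)·Γ_j B Bᵀ − Aᵀ) β_j − q·L x̄, δ_j' = (1/(2r))·⟪β_j, B Bᵀ β_j⟫, with Γ_j(T) = M_j·I, β_j(T) = −M_j·p_j, δ_j(T) = (M_j/2)‖p_j‖². Then for every continuous u : [0,T] → ℝᵐ and continuously differentiable x : [0,T] → ℝⁿ with x' = A x + B u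 on [0,T] and x(0) = x⁰: ∫₀ᵀ [ (q/2)‖x‖² + q⟪x̄, L x⟫ + (r/2)‖u‖² ] dt + min_{j∈{1,…,l}} (M_j/2)‖x(T) − p_j‖² ≥ min_{j∈{1,…,l}} [ ½⟪x⁰, Γ_j(0) x⁰⟫ + ⟪β_j(0), x⁰⟫ + δ_j(0) ]. -/
open scoped RealInnerProductSpace Matrix

attribute [local instance] Matrix.normedAddCommGroup Matrix.normedSpace

noncomputable def mCLM (n m : ℕ) :
    Matrix (Fin n) (Fin m) ℝ →L[ℝ] (EuclideanSpace ℝ (Fin m) →L[ℝ] EuclideanSpace ℝ (Fin n)) :=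
  LinearMap.toContinuousLinearMap
    ((LinearMap.toContinuousLinearMap (𝕜 := ℝ)).toLinearMap.comp
      (Matrix.toEuclideanLin (𝕜 := ℝ)).toLinearMap)

@[simp] lemma mCLM_apply {n m : ℕ} (M : Matrix (Fin n) (Fin m) ℝ) (v : EuclideanSpace ℝ (Fin m)) :
    mCLM n m M v = Matrix.toEuclideanLin M v := rfl

lemma inner_tEL_transpose {n m : ℕ} (M : Matrix (Fin n) (Fin m) ℝ)
    (v : EuclideanSpace ℝ (Fin n)) (w : EuclideanSpace ℝ (Fin m)) :
    ⟪Matrix.toEuclideanLin Mᵀ v, w⟫ = ⟪v, Matrix.toEuclideanLin M w⟫ := by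
  have : Mᵀ = Mᴴ := by ext i k; simp [Matrix.conjTranspose]
  rw [this, Matrix.toEuclideanLin_conjTranspose_eq_adjoint, LinearMap.adjoint_inner_left]

lemma tEL_mul {n m k : ℕ} (M : Matrix (Fin n) (Fin m) ℝ) (N : Matrix (Fin m) (Fin k) ℝ)
    (v : EuclideanSpace ℝ (Fin k)) :
    Matrix.toEuclideanLin (M * N) v = Matrix.toEuclideanLin M (Matrix.toEuclideanLin N v) := by
  simp [Matrix.toEuclideanLin_apply, Matrix.mulVec_mulVec]

lemma tEL_one {n : ℕ} (v : EuclideanSpace ℝ (Fin n)) :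
    Matrix.toEuclideanLin (1 : Matrix (Fin n) (Fin n) ℝ) v = v := by
  simp [Matrix.toEuclideanLin_apply]

set_option maxHeartbeats 1000000 in
lemma alg {n m : ℕ} (A L P : Matrix (Fin n) (Fin n) ℝ) (hP : P.IsSymm) (hL : L.IsSymm)
    (B : Matrix (Fin n) (Fin m) ℝ) (q r : ℝ) (hr : r ≠ 0)
    (X xb b : EuclideanSpace ℝ (Fin n)) (U : EuclideanSpace ℝ (Fin m)) :
    (1/2) * (⟪X, Matrix.toEuclideanLin ((1/r) • (P*B*Bᵀ*P) - P*A - Aᵀ*P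
          - q • (1 : Matrix (Fin n) (Fin n) ℝ)) X
            + Matrix.toEuclideanLin P (Matrix.toEuclideanLin A X + Matrix.toEuclideanLin B U)⟫
        + ⟪Matrix.toEuclideanLin A X + Matrix.toEuclideanLin B U, Matrix.toEuclideanLin P X⟫)
      + (⟪b, Matrix.toEuclideanLin A X + Matrix.toEuclideanLin B U⟫
        + ⟪Matrix.toEuclideanLin ((1/r) • (P*B*Bᵀ) - Aᵀ) b
            - q • Matrix.toEuclideanLin L xb, X⟫)
      + (1/(2*r)) * ⟪b, Matrix.toEuclideanLin (B*Bᵀ) b⟫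
    = (r/2) * ‖U + r⁻¹ • (Matrix.toEuclideanLin Bᵀ (Matrix.toEuclideanLin P X + b))‖^2
      - ((q/2) * ‖X‖^2 + q * ⟪xb, Matrix.toEuclideanLin L X⟫ + (r/2) * ‖U‖^2) := by
  have hB : ∀ (w : EuclideanSpace ℝ (Fin m)) (z : EuclideanSpace ℝ (Fin n)),
      ⟪Matrix.toEuclideanLin B w, z⟫ = ⟪w, Matrix.toEuclideanLin Bᵀ z⟫ := by
    intro w z
    conv_lhs => rw [show B = Bᵀᵀ from (Matrix.transpose_transpose B).symm]
    exact inner_tEL_transpose Bᵀ w z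
  have hB' : ∀ (z : EuclideanSpace ℝ (Fin n)) (w : EuclideanSpace ℝ (Fin m)),
      ⟪z, Matrix.toEuclideanLin B w⟫ = ⟪Matrix.toEuclideanLin Bᵀ z, w⟫ := by
    intro z w; rw [real_inner_comm, hB, real_inner_comm]
  have hA' : ∀ (z w : EuclideanSpace ℝ (Fin n)),
      ⟪Matrix.toEuclideanLin Aᵀ z, w⟫ = ⟪z, Matrix.toEuclideanLin A w⟫ :=
    fun z w => inner_tEL_transpose A z w
  have hA'' : ∀ (z w : EuclideanSpace ℝ (Fin n)),
      ⟪z, Matrix.toEuclideanLin Aᵀ w⟫ = ⟪Matrix.toEuclideanLin A z, w⟫ := by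
    intro z w; rw [real_inner_comm, hA', real_inner_comm]
  have hP' : ∀ (z w : EuclideanSpace ℝ (Fin n)),
      ⟪z, Matrix.toEuclideanLin P w⟫ = ⟪Matrix.toEuclideanLin P z, w⟫ := by
    intro z w
    conv_rhs => rw [show P = Pᵀ from hP.symm]
    rw [inner_tEL_transpose]
  have hL' : ∀ (z w : EuclideanSpace ℝ (Fin n)),
      ⟪Matrix.toEuclideanLin L z, w⟫ = ⟪z, Matrix.toEuclideanLin L w⟫ := by
    intro z w
    conv_lhs => rw [show L = Lᵀ from hL.symm]
    rw [inner_tEL_transpose]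
  simp only [map_sub, map_smul, map_add, LinearMap.sub_apply, LinearMap.smul_apply,
    LinearMap.add_apply, tEL_mul, tEL_one,
    ← real_inner_self_eq_norm_sq, inner_add_left, inner_add_right, inner_sub_left,
    inner_sub_right, real_inner_smul_left, real_inner_smul_right]
  simp only [hB, hB', hA', hA'', hP', hL']
  simp only [real_inner_comm]
  simp only [hB, hB', hA', hA'', hP', hL']
  simp only [real_inner_comm]
  field_simp
  ring

set_option maxHeartbeats 1000000 in
lemma key {n m : ℕ}
    (A L : Matrix (Fin n) (Fin n) ℝ) (hL : L.IsSymm)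
    (B : Matrix (Fin n) (Fin m) ℝ) (q r : ℝ) (hr : 0 < r)
    (T : ℝ) (hT : 0 < T)
    (xbar : ℝ → EuclideanSpace ℝ (Fin n)) (hxbar : Continuous xbar)
    (Γ : ℝ → Matrix (Fin n) (Fin n) ℝ)
    (β : ℝ → EuclideanSpace ℝ (Fin n)) (δ : ℝ → ℝ)
    (hΓs : ∀ t : ℝ, (Γ t).IsSymm)
    (hΓ : ∀ t ∈ Set.Icc (0 : ℝ) T, HasDerivAt Γ
      ((1 / r) • (Γ t * B * Bᵀ * Γ t) - Γ t * A - Aᵀ * Γ t -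
        q • (1 : Matrix (Fin n) (Fin n) ℝ)) t)
    (hβ : ∀ t ∈ Set.Icc (0 : ℝ) T, HasDerivAt β
      (Matrix.toEuclideanLin ((1 / r) • (Γ t * B * Bᵀ) - Aᵀ) (β t) -
        q • Matrix.toEuclideanLin L (xbar t)) t)
    (hδ : ∀ t ∈ Set.Icc (0 : ℝ) T, HasDerivAt δ
      ((1 / (2 * r)) * ⟪β t, Matrix.toEuclideanLin (B * Bᵀ) (β t)⟫) t)
    (u : ℝ → EuclideanSpace ℝ (Fin m)) (hu : Continuous u)
    (x : ℝ → EuclideanSpace ℝ (Fin n))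
    (hx : ∀ t ∈ Set.Icc (0 : ℝ) T, HasDerivAt x
      (Matrix.toEuclideanLin A (x t) + Matrix.toEuclideanLin B (u t)) t) :
    (∫ t in (0 : ℝ)..T, ((q / 2) * ‖x t‖ ^ 2 +
        q * ⟪xbar t, Matrix.toEuclideanLin L (x t)⟫ + (r / 2) * ‖u t‖ ^ 2)) +
      ((1/2) * ⟪x T, Matrix.toEuclideanLin (Γ T) (x T)⟫ + ⟪β T, x T⟫ + δ T) ≥
      (1/2) * ⟪x 0, Matrix.toEuclideanLin (Γ 0) (x 0)⟫ + ⟪β 0, x 0⟫ + δ 0 := by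
  set g : ℝ → ℝ := fun s => (1/2) * ⟪x s, Matrix.toEuclideanLin (Γ s) (x s)⟫
      + ⟪β s, x s⟫ + δ s with hgdef
  set φ : ℝ → ℝ := fun s => (r/2) * ‖u s + r⁻¹ •
      (Matrix.toEuclideanLin Bᵀ (Matrix.toEuclideanLin (Γ s) (x s) + β s))‖^2 with hφdef
  set c : ℝ → ℝ := fun s => (q/2) * ‖x s‖^2 +
      q * ⟪xbar s, Matrix.toEuclideanLin L (x s)⟫ + (r/2) * ‖u s‖^2 with hcdef
  have hg : ∀ t ∈ Set.Icc (0 : ℝ) T, HasDerivAt g (φ t - c t) t := by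
    intro t ht
    have h1 : HasDerivAt (fun s => mCLM n n (Γ s))
        (mCLM n n ((1 / r) • (Γ t * B * Bᵀ * Γ t) - Γ t * A - Aᵀ * Γ t -
          q • (1 : Matrix (Fin n) (Fin n) ℝ))) t :=
      (mCLM n n).hasFDerivAt.comp_hasDerivAt t (hΓ t ht)
    have h2 := h1.clm_apply (hx t ht)
    have h3 := (hx t ht).inner ℝ h2
    have h4 := (hβ t ht).inner ℝ (hx t ht)
    have h5 := ((h3.const_mul (1/2 : ℝ)).add h4).add (hδ t ht)
    have halg := alg A L (Γ t) (hΓs t) hL B q r (ne_of_gt hr) (x t) (xbar t) (β t) (u t)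
    have : φ t - c t = (1/2) * (⟪x t, Matrix.toEuclideanLin ((1/r) • (Γ t*B*Bᵀ*Γ t) - Γ t*A - Aᵀ*Γ t
          - q • (1 : Matrix (Fin n) (Fin n) ℝ)) (x t)
            + Matrix.toEuclideanLin (Γ t) (Matrix.toEuclideanLin A (x t) + Matrix.toEuclideanLin B (u t))⟫
        + ⟪Matrix.toEuclideanLin A (x t) + Matrix.toEuclideanLin B (u t), Matrix.toEuclideanLin (Γ t) (x t)⟫)
      + (⟪β t, Matrix.toEuclideanLin A (x t) + Matrix.toEuclideanLin B (u t)⟫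
        + ⟪Matrix.toEuclideanLin ((1/r) • (Γ t*B*Bᵀ) - Aᵀ) (β t)
            - q • Matrix.toEuclideanLin L (xbar t), x t⟫)
      + (1/(2*r)) * ⟪β t, Matrix.toEuclideanLin (B*Bᵀ) (β t)⟫ := halg.symm
    rw [this]
    exact h5
  -- continuity
  have hxC : ContinuousOn x (Set.Icc 0 T) := fun t ht => ((hx t ht).continuousAt).continuousWithinAt
  have hΓC : ContinuousOn Γ (Set.Icc 0 T) := fun t ht => ((hΓ t ht).continuousAt).continuousWithinAt
  have hβC : ContinuousOn β (Set.Icc 0 T) := fun t ht => ((hβ t ht).continuousAt).continuousWithinAt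
  have hPXc : ContinuousOn (fun t => Matrix.toEuclideanLin (Γ t) (x t)) (Set.Icc 0 T) :=
    ContinuousOn.clm_apply ((mCLM n n).continuous.comp_continuousOn hΓC) hxC
  have hLXc : ContinuousOn (fun t => Matrix.toEuclideanLin L (x t)) (Set.Icc 0 T) :=
    (LinearMap.continuous_of_finiteDimensional (Matrix.toEuclideanLin L)).comp_continuousOn hxC
  have hcC : ContinuousOn c (Set.Icc 0 T) := by
    apply ContinuousOn.add
    apply ContinuousOn.add
    · exact continuousOn_const.mul ((hxC.norm).pow 2)
    · exact continuousOn_const.mul (ContinuousOn.inner hxbar.continuousOn hLXc)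
    · exact continuousOn_const.mul ((hu.continuousOn.norm).pow 2)
  have hφC : ContinuousOn φ (Set.Icc 0 T) := by
    apply continuousOn_const.mul
    apply ContinuousOn.pow
    apply ContinuousOn.norm
    exact hu.continuousOn.add
      (((LinearMap.continuous_of_finiteDimensional
        (Matrix.toEuclideanLin Bᵀ)).comp_continuousOn (hPXc.add hβC)).const_smul r⁻¹)
  have huIcc : Set.uIcc (0 : ℝ) T = Set.Icc 0 T := Set.uIcc_of_le hT.le
  have hφI : IntervalIntegrable φ MeasureTheory.volume 0 T := by
    apply ContinuousOn.intervalIntegrable; rwa [huIcc]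
  have hcI : IntervalIntegrable c MeasureTheory.volume 0 T := by
    apply ContinuousOn.intervalIntegrable; rwa [huIcc]
  have hFTC : ∫ t in (0:ℝ)..T, (φ t - c t) = g T - g 0 :=
    intervalIntegral.integral_eq_sub_of_hasDerivAt
      (fun t ht => hg t (huIcc ▸ ht)) (hφI.sub hcI)
  have hsub : ∫ t in (0:ℝ)..T, (φ t - c t) = (∫ t in (0:ℝ)..T, φ t) - ∫ t in (0:ℝ)..T, c t :=
    intervalIntegral.integral_sub hφI hcI
  have hφpos : 0 ≤ ∫ t in (0:ℝ)..T, φ t := by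
    apply intervalIntegral.integral_nonneg hT.le
    intro t _
    have : (0:ℝ) ≤ r/2 := by linarith
    positivity
  have hint_eq : (∫ t in (0 : ℝ)..T, ((q / 2) * ‖x t‖ ^ 2 +
      q * ⟪xbar t, Matrix.toEuclideanLin L (x t)⟫ + (r / 2) * ‖u t‖ ^ 2)) =
      ∫ t in (0:ℝ)..T, c t := rfl
  have hgT : g T = (1/2) * ⟪x T, Matrix.toEuclideanLin (Γ T) (x T)⟫ + ⟪β T, x T⟫ + δ T := rfl
  have hg0 : g 0 = (1/2) * ⟪x 0, Matrix.toEuclideanLin (Γ 0) (x 0)⟫ + ⟪β 0, x 0⟫ + δ 0 := rfl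
  rw [hint_eq, ← hgT, ← hg0]
  linarith [hFTC, hsub, hφpos]

/-- Lower-bound half of the best-response lemma: the collective-choice cost, whose terminal
cost is the minimum over the `l` destinations `p j` of `(M j / 2)‖x(T) − p j‖²`, is bounded
below by the minimum over `j` of the quadratic values
`½⟪x⁰, Γ_j(0) x⁰⟫ + ⟪β_j(0), x⁰⟫ + δ_j(0)`. -/
theorem collective_choice_cost_lower_bound (n m l : ℕ) (hn : 0 < n) (hm : 0 < m)
    (hl : 0 < l)
    (A L : Matrix (Fin n) (Fin n) ℝ) (hL : L.IsSymm)
    (B : Matrix (Fin n) (Fin m) ℝ) (q r : ℝ) (hr : 0 < r)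
    (T : ℝ) (hT : 0 < T)
    (xbar : ℝ → EuclideanSpace ℝ (Fin n)) (hxbar : Continuous xbar)
    (M : Fin l → ℝ) (hM : ∀ j : Fin l, 0 ≤ M j) (p : Fin l → EuclideanSpace ℝ (Fin n))
    (Γ : Fin l → ℝ → Matrix (Fin n) (Fin n) ℝ)
    (β : Fin l → ℝ → EuclideanSpace ℝ (Fin n)) (δ : Fin l → ℝ → ℝ)
    (hΓs : ∀ (j : Fin l) (t : ℝ), (Γ j t).IsSymm)
    (hΓ : ∀ (j : Fin l), ∀ t ∈ Set.Icc (0 : ℝ) T, HasDerivAt (Γ j)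
      ((1 / r) • (Γ j t * B * Bᵀ * Γ j t) - Γ j t * A - Aᵀ * Γ j t -
        q • (1 : Matrix (Fin n) (Fin n) ℝ)) t)
    (hβ : ∀ (j : Fin l), ∀ t ∈ Set.Icc (0 : ℝ) T, HasDerivAt (β j)
      (Matrix.toEuclideanLin ((1 / r) • (Γ j t * B * Bᵀ) - Aᵀ) (β j t) -
        q • Matrix.toEuclideanLin L (xbar t)) t)
    (hδ : ∀ (j : Fin l), ∀ t ∈ Set.Icc (0 : ℝ) T, HasDerivAt (δ j)
      ((1 / (2 * r)) * ⟪β j t, Matrix.toEuclideanLin (B * Bᵀ) (β j t)⟫) t)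
    (hΓT : ∀ j : Fin l, Γ j T = M j • (1 : Matrix (Fin n) (Fin n) ℝ))
    (hβT : ∀ j : Fin l, β j T = (-(M j)) • p j)
    (hδT : ∀ j : Fin l, δ j T = (M j / 2) * ‖p j‖ ^ 2)
    (u : ℝ → EuclideanSpace ℝ (Fin m)) (hu : Continuous u)
    (x : ℝ → EuclideanSpace ℝ (Fin n)) (x0 : EuclideanSpace ℝ (Fin n))
    (hx : ∀ t ∈ Set.Icc (0 : ℝ) T, HasDerivAt x
      (Matrix.toEuclideanLin A (x t) + Matrix.toEuclideanLin B (u t)) t)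
    (hx0 : x 0 = x0) :
    (∫ t in (0 : ℝ)..T, ((q / 2) * ‖x t‖ ^ 2 +
        q * ⟪xbar t, Matrix.toEuclideanLin L (x t)⟫ + (r / 2) * ‖u t‖ ^ 2)) +
      Finset.univ.inf' ⟨⟨0, hl⟩, Finset.mem_univ _⟩
        (fun j : Fin l => (M j / 2) * ‖x T - p j‖ ^ 2) ≥
    Finset.univ.inf' ⟨⟨0, hl⟩, Finset.mem_univ _⟩
      (fun j : Fin l =>
        (1 / 2) * ⟪x0, Matrix.toEuclideanLin (Γ j 0) x0⟫ + ⟪β j 0, x0⟫ + δ j 0) := by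
  obtain ⟨j0, -, hj0⟩ := Finset.exists_mem_eq_inf' (⟨⟨0, hl⟩, Finset.mem_univ _⟩ :
      (Finset.univ : Finset (Fin l)).Nonempty)
    (fun j : Fin l => (M j / 2) * ‖x T - p j‖ ^ 2)
  have hkey := key A L hL B q r hr T hT xbar hxbar (Γ j0) (β j0) (δ j0)
    (hΓs j0) (hΓ j0) (hβ j0) (hδ j0) u hu x hx
  have hgT : (1/2) * ⟪x T, Matrix.toEuclideanLin (Γ j0 T) (x T)⟫ + ⟪β j0 T, x T⟫ + δ j0 T
      = (M j0 / 2) * ‖x T - p j0‖ ^ 2 := by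
    rw [hΓT, hβT, hδT, norm_sub_sq_real]
    simp only [map_smul, LinearMap.smul_apply, tEL_one, real_inner_smul_left,
      real_inner_smul_right, real_inner_self_eq_norm_sq]
    rw [real_inner_comm (x T) (p j0)]
    ring
  have hle : Finset.univ.inf' ⟨⟨0, hl⟩, Finset.mem_univ _⟩
      (fun j : Fin l =>
        (1 / 2) * ⟪x0, Matrix.toEuclideanLin (Γ j 0) x0⟫ + ⟪β j 0, x0⟫ + δ j 0) ≤
      (1 / 2) * ⟪x0, Matrix.toEuclideanLin (Γ j0 0) x0⟫ + ⟪β j0 0, x0⟫ + δ j0 0 :=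
    Finset.inf'_le _ (Finset.mem_univ j0)
  rw [hx0] at hkey
  rw [hj0, ← hgT]
  linarith [hkey, hle]
end

section
/- Fix positive integers n, m, real n×n matrices A and L with L symmetric, a real n×m matrix B, reals q and r with r > 0, T > 0, a continuous function x̄ : [0,T] → ℝⁿ, M ≥ 0, and p ∈ ℝⁿ. Let Γ, β, δ be continuously differentiable on [0,T], with Γ(t) symmetric for all t, solving Γ' = (1/r)·Γ B Bᵀ Γ − Γ A − Aᵀ Γ − q·I, β' = ((1/r)·Γ B Bᵀ − Aᵀ) β − q·L x̄, δ' = (1/(2r))·⟪β, B Bᵀ β⟫, with Γ(T) = M·I, β(T) = −M·p, δ(T) = (M/2)‖p‖². Suppose x̂ : [0,T] → ℝⁿ is continuously differentiable with x̂(0) = x⁰ and x̂' = A x̂ − (1/r)·B Bᵀ (Γ x̂ + β) on [0,T], and define û(t) = −(1/r)·Bᵀ(Γ(t) x̂(t) + β(t)). Then ∫₀ᵀ [ (q/2)‖x̂(t)‖² + q⟪x̄(t), L x̂(t)⟫ + (r/2)‖û(t)‖² ] dt + (M/2)‖x̂(T) − p‖² = ½⟪x⁰, Γ(0) x⁰⟫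 + ⟪β(0), x⁰⟫ + δ(0). -/
/-!
Along the closed-loop trajectory, the candidate value `V t = ½⟪x̂, Γ x̂⟫ + ⟪β, x̂⟫ + δ` satisfies
`V' = -(running cost)`: substituting the Riccati equations for `Γ'`, `β'`, `δ'` and the closed-loop
dynamics for `x̂'`, the terms in `A` cancel and the terms in `B` complete the square
`-(1/(2r))‖Bᵀ(Γ x̂ + β)‖²`, which is exactly the control cost of `û`. Integrating over `[0, T]`
gives cost `= V 0 - V T`, and the terminal conditions turn `V T` into the terminal cost
`(M/2)‖x̂ T - p‖²`.
-/

open scoped RealInnerProductSpace Matrix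

attribute [local instance] Matrix.normedAddCommGroup Matrix.normedSpace

namespace Matrix

variable {ι κ μ : Type*} [Fintype κ] [DecidableEq κ]

theorem toEuclideanLin_mul_apply [Fintype μ] [DecidableEq μ] (X : Matrix ι κ ℝ)
    (Y : Matrix κ μ ℝ) (x : EuclideanSpace ℝ μ) :
    toEuclideanLin (X * Y) x = toEuclideanLin X (toEuclideanLin Y x) := by
  simp

theorem toEuclideanLin_one_apply (x : EuclideanSpace ℝ κ) :
    toEuclideanLin (1 : Matrix κ κ ℝ) x = x := by
  simp

theorem inner_toEuclideanLin_transpose [Fintype ι] [DecidableEq ι] (X : Matrix ι κ ℝ)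
    (x : EuclideanSpace ℝ ι) (y : EuclideanSpace ℝ κ) :
    ⟪toEuclideanLin Xᵀ x, y⟫ = ⟪x, toEuclideanLin X y⟫ := by
  rw [← conjTranspose_eq_transpose_of_trivial, toEuclideanLin_conjTranspose_eq_adjoint,
    LinearMap.adjoint_inner_left]

theorem IsSymm.inner_toEuclideanLin {X : Matrix κ κ ℝ} (hX : X.IsSymm)
    (x y : EuclideanSpace ℝ κ) :
    ⟪toEuclideanLin X x, y⟫ = ⟪x, toEuclideanLin X y⟫ := by
  rw [← inner_toEuclideanLin_transpose, hX.eq]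

variable [Fintype ι]

variable (ι κ) in
noncomputable def toEuclideanLinCLM :
    Matrix ι κ ℝ →L[ℝ] EuclideanSpace ℝ κ →L[ℝ] EuclideanSpace ℝ ι :=
  LinearMap.toContinuousLinearMap
    (LinearMap.toContinuousLinearMap.toLinearMap ∘ₗ toEuclideanLin.toLinearMap)

@[simp]
theorem toEuclideanLinCLM_apply (X : Matrix ι κ ℝ) (x : EuclideanSpace ℝ κ) :
    toEuclideanLinCLM ι κ X x = toEuclideanLin X x :=
  rfl

end Matrix

open Matrix

section Calculus

variable {ι κ : Type*} [Fintype ι] [Fintype κ] [DecidableEq κ]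

theorem HasDerivAt.toEuclideanLin_apply {X : ℝ → Matrix ι κ ℝ} {x : ℝ → EuclideanSpace ℝ κ}
    {X' : Matrix ι κ ℝ} {x' : EuclideanSpace ℝ κ} {t : ℝ} (hX : HasDerivAt X X' t)
    (hx : HasDerivAt x x' t) :
    HasDerivAt (fun s => toEuclideanLin (X s) (x s))
      (toEuclideanLin X' (x t) + toEuclideanLin (X t) x') t :=
  ((toEuclideanLinCLM ι κ).hasFDerivAt.comp_hasDerivAt t hX).clm_apply hx

@[fun_prop]
theorem ContinuousAt.toEuclideanLin_apply {X : ℝ → Matrix ι κ ℝ} {x : ℝ → EuclideanSpace ℝ κ}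
    {t : ℝ} (hX : ContinuousAt X t) (hx : ContinuousAt x t) :
    ContinuousAt (fun s => toEuclideanLin (X s) (x s)) t :=
  ((toEuclideanLinCLM ι κ).continuous.continuousAt.comp hX).clm_apply hx

end Calculus

section ValueFunction

variable {ι κ : Type*} [Fintype ι] [DecidableEq ι] [Fintype κ] [DecidableEq κ]

noncomputable def lqValue (G : Matrix ι ι ℝ) (β x : EuclideanSpace ℝ ι) (δ : ℝ) : ℝ :=
  1 / 2 * ⟪x, toEuclideanLin G x⟫ + ⟪β, x⟫ + δ

theorem lqValue_terminal (M : ℝ) (p x : EuclideanSpace ℝ ι) :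
    lqValue (M • 1) ((-M) • p) x (M / 2 * ‖p‖ ^ 2) = M / 2 * ‖x - p‖ ^ 2 := by
  simp only [lqValue, map_smul, LinearMap.smul_apply, toEuclideanLin_one_apply,
    real_inner_smul_left, real_inner_smul_right, real_inner_self_eq_norm_sq]
  rw [norm_sub_sq_real, real_inner_comm p x]
  ring

theorem HasDerivAt.lqValue {G : ℝ → Matrix ι ι ℝ} {β x : ℝ → EuclideanSpace ℝ ι} {δ : ℝ → ℝ}
    {G' : Matrix ι ι ℝ} {β' x' : EuclideanSpace ℝ ι} {δ' t : ℝ} (hG : HasDerivAt G G' t)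
    (hβ : HasDerivAt β β' t) (hx : HasDerivAt x x' t) (hδ : HasDerivAt δ δ' t) :
    HasDerivAt (fun s => lqValue (G s) (β s) (x s) (δ s))
      (1 / 2 * (⟪x t, toEuclideanLin G' (x t) + toEuclideanLin (G t) x'⟫ +
          ⟪x', toEuclideanLin (G t) (x t)⟫) + (⟪β t, x'⟫ + ⟪β', x t⟫) + δ') t :=
  (((hx.inner ℝ (hG.toEuclideanLin_apply hx)).const_mul (1 / 2)).add (hβ.inner ℝ hx)).add hδ

theorem lqValue_deriv_eq_neg_runningCost (A L G G' : Matrix ι ι ℝ) (B : Matrix ι κ ℝ)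
    {q r : ℝ} (hr : r ≠ 0) (hL : L.IsSymm) (hG : G.IsSymm) (x x' β β' xbar : EuclideanSpace ℝ ι)
    (δ' : ℝ) (hG' : G' = (1 / r) • (G * B * Bᵀ * G) - G * A - Aᵀ * G - q • 1)
    (hβ' : β' = toEuclideanLin ((1 / r) • (G * B * Bᵀ) - Aᵀ) β - q • toEuclideanLin L xbar)
    (hδ' : δ' = 1 / (2 * r) * ⟪β, toEuclideanLin (B * Bᵀ) β⟫)
    (hx' : x' = toEuclideanLin A x - (1 / r) • toEuclideanLin (B * Bᵀ) (toEuclideanLin G x + β)) :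
    1 / 2 * (⟪x, toEuclideanLin G' x + toEuclideanLin G x'⟫ + ⟪x', toEuclideanLin G x⟫) +
        (⟪β, x'⟫ + ⟪β', x⟫) + δ' =
      -(q / 2 * ‖x‖ ^ 2 + q * ⟪xbar, toEuclideanLin L x⟫ +
        r / 2 * ‖(-(1 / r)) • toEuclideanLin Bᵀ (toEuclideanLin G x + β)‖ ^ 2) := by
  have hGx : ∀ v, ⟪x, toEuclideanLin G v⟫ = ⟪toEuclideanLin G x, v⟫ := fun v =>
    (hG.inner_toEuclideanLin x v).symm
  rw [inner_add_right, hGx x', real_inner_comm (toEuclideanLin G x) x', real_inner_comm x β']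
  subst hG' hβ' hδ' hx'
  simp only [map_sub, map_smul, map_add, LinearMap.sub_apply, LinearMap.smul_apply,
    toEuclideanLin_mul_apply, toEuclideanLin_one_apply, inner_add_left, inner_add_right,
    inner_sub_right, real_inner_smul_right, norm_smul, Real.norm_eq_abs, mul_pow, sq_abs, hGx,
    ← inner_toEuclideanLin_transpose B, ← inner_toEuclideanLin_transpose Aᵀ, transpose_transpose,
    ← real_inner_self_eq_norm_sq]
  rw [real_inner_comm (toEuclideanLin A x) β, real_inner_comm (toEuclideanLin A x),
    real_inner_comm (toEuclideanLin Bᵀ (toEuclideanLin G x)) (toEuclideanLin Bᵀ β),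
    real_inner_comm (toEuclideanLin L xbar) x, hL.inner_toEuclideanLin]
  field_simp
  ring

end ValueFunction

theorem closed_loop_cost_attainment_general (n m : ℕ)
    (A L : Matrix (Fin n) (Fin n) ℝ) (hL : L.IsSymm)
    (B : Matrix (Fin n) (Fin m) ℝ) (q r : ℝ) (hr : 0 < r)
    (T : ℝ) (hT : 0 < T)
    (xbar : ℝ → EuclideanSpace ℝ (Fin n)) (hxbar : Continuous xbar)
    (M : ℝ) (p : EuclideanSpace ℝ (Fin n))
    (Γ : ℝ → Matrix (Fin n) (Fin n) ℝ) (β : ℝ → EuclideanSpace ℝ (Fin n)) (δ : ℝ → ℝ)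
    (hΓs : ∀ t : ℝ, (Γ t).IsSymm)
    (hΓ : ∀ t ∈ Set.Icc (0 : ℝ) T, HasDerivAt Γ
      ((1 / r) • (Γ t * B * Bᵀ * Γ t) - Γ t * A - Aᵀ * Γ t -
        q • (1 : Matrix (Fin n) (Fin n) ℝ)) t)
    (hβ : ∀ t ∈ Set.Icc (0 : ℝ) T, HasDerivAt β
      (Matrix.toEuclideanLin ((1 / r) • (Γ t * B * Bᵀ) - Aᵀ) (β t) -
        q • Matrix.toEuclideanLin L (xbar t)) t)
    (hδ : ∀ t ∈ Set.Icc (0 : ℝ) T, HasDerivAt δ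
      ((1 / (2 * r)) * ⟪β t, Matrix.toEuclideanLin (B * Bᵀ) (β t)⟫) t)
    (hΓT : Γ T = M • (1 : Matrix (Fin n) (Fin n) ℝ))
    (hβT : β T = (-M) • p)
    (hδT : δ T = (M / 2) * ‖p‖ ^ 2)
    (xhat : ℝ → EuclideanSpace ℝ (Fin n)) (x0 : EuclideanSpace ℝ (Fin n))
    (hxhat0 : xhat 0 = x0)
    (hxhat : ∀ t ∈ Set.Icc (0 : ℝ) T, HasDerivAt xhat
      (Matrix.toEuclideanLin A (xhat t) -
        (1 / r) • Matrix.toEuclideanLin (B * Bᵀ)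
          (Matrix.toEuclideanLin (Γ t) (xhat t) + β t)) t) :
    (∫ t in (0 : ℝ)..T, ((q / 2) * ‖xhat t‖ ^ 2 +
        q * ⟪xbar t, Matrix.toEuclideanLin L (xhat t)⟫ +
        (r / 2) * ‖(-(1 / r)) •
          Matrix.toEuclideanLin Bᵀ (Matrix.toEuclideanLin (Γ t) (xhat t) + β t)‖ ^ 2)) +
      (M / 2) * ‖xhat T - p‖ ^ 2 =
    (1 / 2) * ⟪x0, Matrix.toEuclideanLin (Γ 0) x0⟫ + ⟪β 0, x0⟫ + δ 0 := by
  have hIcc : Set.uIcc 0 T = Set.Icc 0 T := Set.uIcc_of_le hT.le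
  rw [intervalIntegral.integral_eq_sub_of_hasDerivAt
    (f := fun s => -lqValue (Γ s) (β s) (xhat s) (δ s))]
  · rw [hΓT, hβT, hδT, lqValue_terminal, hxhat0, lqValue]
    ring
  · intro t ht
    rw [hIcc] at ht
    have hV := ((hΓ t ht).lqValue (hβ t ht) (hxhat t ht) (hδ t ht)).neg
    rwa [lqValue_deriv_eq_neg_runningCost A L _ _ B hr.ne' hL (hΓs t) _ _ _ _ (xbar t) _
      rfl rfl rfl rfl, neg_neg] at hV
  · refine ContinuousOn.intervalIntegrable fun t ht => ContinuousAt.continuousWithinAt ?_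
    rw [hIcc] at ht
    have hΓc := (hΓ t ht).continuousAt
    have hβc := (hβ t ht).continuousAt
    have hxc := (hxhat t ht).continuousAt
    fun_prop

/-- Attainment half of the best-response lemma: the closed-loop trajectory driven by the
candidate optimal feedback `û = −(1/r)Bᵀ(Γ x̂ + β)` achieves exactly the quadratic value
`½⟪x⁰, Γ(0)x⁰⟫ + ⟪β(0), x⁰⟫ + δ(0)` for the LQ tracking cost. -/
theorem closed_loop_cost_attainment (n m : ℕ) (hn : 0 < n) (hm : 0 < m)
    (A L : Matrix (Fin n) (Fin n) ℝ) (hL : L.IsSymm)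
    (B : Matrix (Fin n) (Fin m) ℝ) (q r : ℝ) (hr : 0 < r)
    (T : ℝ) (hT : 0 < T)
    (xbar : ℝ → EuclideanSpace ℝ (Fin n)) (hxbar : Continuous xbar)
    (M : ℝ) (hM : 0 ≤ M) (p : EuclideanSpace ℝ (Fin n))
    (Γ : ℝ → Matrix (Fin n) (Fin n) ℝ) (β : ℝ → EuclideanSpace ℝ (Fin n)) (δ : ℝ → ℝ)
    (hΓs : ∀ t : ℝ, (Γ t).IsSymm)
    (hΓ : ∀ t ∈ Set.Icc (0 : ℝ) T, HasDerivAt Γ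
      ((1 / r) • (Γ t * B * Bᵀ * Γ t) - Γ t * A - Aᵀ * Γ t -
        q • (1 : Matrix (Fin n) (Fin n) ℝ)) t)
    (hβ : ∀ t ∈ Set.Icc (0 : ℝ) T, HasDerivAt β
      (Matrix.toEuclideanLin ((1 / r) • (Γ t * B * Bᵀ) - Aᵀ) (β t) -
        q • Matrix.toEuclideanLin L (xbar t)) t)
    (hδ : ∀ t ∈ Set.Icc (0 : ℝ) T, HasDerivAt δ
      ((1 / (2 * r)) * ⟪β t, Matrix.toEuclideanLin (B * Bᵀ) (β t)⟫) t)
    (hΓT : Γ T = M • (1 : Matrix (Fin n) (Fin n) ℝ))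
    (hβT : β T = (-M) • p)
    (hδT : δ T = (M / 2) * ‖p‖ ^ 2)
    (xhat : ℝ → EuclideanSpace ℝ (Fin n)) (x0 : EuclideanSpace ℝ (Fin n))
    (hxhat0 : xhat 0 = x0)
    (hxhat : ∀ t ∈ Set.Icc (0 : ℝ) T, HasDerivAt xhat
      (Matrix.toEuclideanLin A (xhat t) -
        (1 / r) • Matrix.toEuclideanLin (B * Bᵀ)
          (Matrix.toEuclideanLin (Γ t) (xhat t) + β t)) t) :
    (∫ t in (0 : ℝ)..T, ((q / 2) * ‖xhat t‖ ^ 2 +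
        q * ⟪xbar t, Matrix.toEuclideanLin L (xhat t)⟫ +
        (r / 2) * ‖(-(1 / r)) •
          Matrix.toEuclideanLin Bᵀ (Matrix.toEuclideanLin (Γ t) (xhat t) + β t)‖ ^ 2)) +
      (M / 2) * ‖xhat T - p‖ ^ 2 =
    (1 / 2) * ⟪x0, Matrix.toEuclideanLin (Γ 0) x0⟫ + ⟪β 0, x0⟫ + δ 0 :=
  closed_loop_cost_attainment_general n m A L hL B q r hr T hT xbar hxbar M p Γ β δ hΓs hΓ hβ hδ hΓT
    hβT hδT xhat x0 hxhat0 hxhat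
end

section
/- Let n and N be positive integers with N ≥ 1, q a real number, Z an n×n real matrix, and x : Fin N → ℝⁿ a family of vectors. Fix i ∈ Fin N, let m = (1/N) ∑_{j ≠ i} x j and x⁽ᴺ⁾ = (1/N) ∑_{j} x j, and define the n×n matrices Q̂ = (q/2)·(I − Z/N)ᵀ(I − Z/N) + (q(N−1)/(2N²))·ZᵀZ and L̂ = −q·Zᵀ(I − Z/N) − q·Z + (q(N−1)/N)·ZᵀZ. Then (q/2) ∑_{j=1}^{N} ‖x j − Z x⁽ᴺ⁾‖² = ⟪x i, Q̂ (x i)⟫ + ⟪m, L̂ (x i)⟫ + (q/2)‖Z m‖² + (q/2) ∑_{j ≠ i} ‖x j − Z m‖², where ⟪·,·⟫ is the Euclidean inner product on ℝⁿ. -/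
open scoped RealInnerProductSpace Matrix

set_option maxHeartbeats 1000000

/-- Decomposition of the social running cost used for person-by-person optimality:
with `m = (1/N) ∑_{j ≠ i} x j`, `x⁽ᴺ⁾ = (1/N) ∑ j, x j`,
`Q̂ = (q/2)(I − Z/N)ᵀ(I − Z/N) + (q(N−1)/(2N²)) Zᵀ Z` and
`L̂ = −q Zᵀ(I − Z/N) − q Z + (q(N−1)/N) Zᵀ Z`, the total coupling cost splits into a part
depending on agent `i`'s state plus a remainder depending only on the other agents. -/
theorem person_by_person_cost_decomposition (n N : ℕ) (hn : 0 < n) (hN : 1 ≤ N)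
    (q : ℝ) (Z : Matrix (Fin n) (Fin n) ℝ)
    (x : Fin N → EuclideanSpace ℝ (Fin n)) (i : Fin N) :
    (q / 2) * ∑ j : Fin N,
        ‖x j - Matrix.toEuclideanLin Z ((N : ℝ)⁻¹ • (∑ k : Fin N, x k))‖ ^ 2 =
      ⟪x i, Matrix.toEuclideanLin
          ((q / 2) • (((1 : Matrix (Fin n) (Fin n) ℝ) - (N : ℝ)⁻¹ • Z)ᵀ *
              ((1 : Matrix (Fin n) (Fin n) ℝ) - (N : ℝ)⁻¹ • Z)) +
            (q * ((N : ℝ) - 1) / (2 * (N : ℝ) ^ 2)) • (Zᵀ * Z)) (x i)⟫ +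
        ⟪(N : ℝ)⁻¹ • (∑ j ∈ Finset.univ.erase i, x j),
          Matrix.toEuclideanLin
            ((-q) • (Zᵀ * ((1 : Matrix (Fin n) (Fin n) ℝ) - (N : ℝ)⁻¹ • Z)) -
              q • Z + (q * ((N : ℝ) - 1) / (N : ℝ)) • (Zᵀ * Z)) (x i)⟫ +
        (q / 2) * ‖Matrix.toEuclideanLin Z
            ((N : ℝ)⁻¹ • (∑ j ∈ Finset.univ.erase i, x j))‖ ^ 2 +
        (q / 2) * ∑ j ∈ Finset.univ.erase i,
          ‖x j - Matrix.toEuclideanLin Z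
              ((N : ℝ)⁻¹ • (∑ k ∈ Finset.univ.erase i, x k))‖ ^ 2 := by
  classical
  have hNe : (N : ℝ) ≠ 0 := Nat.cast_ne_zero.mpr (by omega)
  have hmul : ∀ (M P : Matrix (Fin n) (Fin n) ℝ) (v : EuclideanSpace ℝ (Fin n)),
      Matrix.toEuclideanLin (M * P) v = Matrix.toEuclideanLin M (Matrix.toEuclideanLin P v) := by
    intro M P v; simp [Matrix.toEuclideanLin_apply, Matrix.mulVec_mulVec]
  have hone : ∀ v : EuclideanSpace ℝ (Fin n),
      Matrix.toEuclideanLin (1 : Matrix (Fin n) (Fin n) ℝ) v = v := by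
    intro v; simp [Matrix.toEuclideanLin_apply]
  have hT : ∀ (M : Matrix (Fin n) (Fin n) ℝ) (u v : EuclideanSpace ℝ (Fin n)),
      ⟪u, Matrix.toEuclideanLin Mᵀ v⟫ = ⟪Matrix.toEuclideanLin M u, v⟫ := by
    intro M u v
    rw [← Matrix.conjTranspose_eq_transpose_of_trivial,
      Matrix.toEuclideanLin_conjTranspose_eq_adjoint, LinearMap.adjoint_inner_right]
  set s : ℝ := (N : ℝ)⁻¹ with hs
  set S : EuclideanSpace ℝ (Fin n) := ∑ j ∈ Finset.univ.erase i, x j with hS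
  set A : EuclideanSpace ℝ (Fin n) →ₗ[ℝ] EuclideanSpace ℝ (Fin n) := Matrix.toEuclideanLin Z with hA
  have hcard : ((Finset.univ.erase i).card : ℝ) = (N : ℝ) - 1 := by
    rw [Finset.card_erase_of_mem (Finset.mem_univ i), Finset.card_univ, Fintype.card_fin,
      Nat.cast_sub hN, Nat.cast_one]
  have hsum : (∑ k : Fin N, x k) = x i + S := by
    rw [hS, Finset.add_sum_erase _ x (Finset.mem_univ i)]
  have hstep : ∀ j : Fin N, ‖x j - (s • A (x i) + s • A S)‖ ^ 2
      = ‖x j - s • A S‖ ^ 2 - 2 * s * ⟪x j, A (x i)⟫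
        + (2 * s ^ 2 * ⟪A S, A (x i)⟫ + s ^ 2 * ⟪A (x i), A (x i)⟫) := by
    intro j
    have h1 : x j - (s • A (x i) + s • A S) = (x j - s • A S) - s • A (x i) := by module
    rw [h1, norm_sub_sq_real]
    simp only [inner_sub_left, real_inner_smul_left, real_inner_smul_right, norm_smul,
      mul_pow, sq_abs, Real.norm_eq_abs, real_inner_self_eq_norm_sq]
    ring
  have hsum2 : ∑ j ∈ Finset.univ.erase i, ‖x j - (s • A (x i) + s • A S)‖ ^ 2
      = (∑ j ∈ Finset.univ.erase i, ‖x j - s • A S‖ ^ 2) - 2 * s * ⟪S, A (x i)⟫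
        + ((N : ℝ) - 1) * (2 * s ^ 2 * ⟪A S, A (x i)⟫ + s ^ 2 * ⟪A (x i), A (x i)⟫) := by
    rw [Finset.sum_congr rfl fun j _ => hstep j, Finset.sum_add_distrib, Finset.sum_sub_distrib,
      Finset.sum_const, nsmul_eq_mul, hcard, ← Finset.mul_sum, ← sum_inner, ← hS]
  rw [hsum, ← Finset.add_sum_erase Finset.univ _ (Finset.mem_univ i)]
  simp only [map_add, map_smul, smul_add, map_sub, map_neg, LinearMap.add_apply,
    LinearMap.sub_apply, LinearMap.smul_apply, LinearMap.neg_apply, hmul, hone,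
    inner_smul_right, inner_add_right, inner_sub_right, inner_neg_right, hT,
    real_inner_smul_left, ← hA]
  rw [hsum2, hstep i]
  simp only [← real_inner_self_eq_norm_sq, inner_sub_left, inner_sub_right, inner_add_left,
    inner_add_right, real_inner_smul_left, real_inner_smul_right]
  rw [real_inner_comm (A (x i)) (x i), real_inner_comm (A S) (x i)]
  simp only [hs]
  field_simp
  ring
end
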